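/- Converse Bellman flow: if a nonnegative function ρ : S × A → ℝ satisfies Σ_a ρ(s,a) = d₀(s) + γ Σ_{s',a'} ρ(s',a') T(s|s',a') for all s ∈ S, and Σ_a ρ(s,a) > 0 for all s, then the stationary policy π_ρ defined by π_ρ(a|s) = ρ(s,a) / Σ_{a'} ρ(s,a') is the unique stationary policy whose occupancy measure equals ρ. -/
import Mathlib


open scoped BigOperators
set_option linter.unusedSectionVars false

section MDP

variable {S A : Type} [Fintype S] [Fintype A] [DecidableEq S]

/-- `T` is a transition kernel: each `T s a` is a probability distribution on states. -/
def IsKernel (T : S → A → S → ℝ) : Prop :=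
  (∀ s a s', 0 ≤ T s a s') ∧ ∀ s a, ∑ s', T s a s' = 1

/-- `π` is a stationary (randomized) policy. -/
def IsPolicy (π : S → A → ℝ) : Prop :=
  (∀ s a, 0 ≤ π s a) ∧ ∀ s, ∑ a, π s a = 1

/-- `d` is a probability distribution on states. -/
def IsDist (d : S → ℝ) : Prop := (∀ s, 0 ≤ d s) ∧ ∑ s, d s = 1

/-- The state marginal distribution at time `t` of the Markov chain induced by
policy `π` and kernel `T`, started from the initial distribution `d₀`. -/
def stateDist (T : S → A → S → ℝ) (π : S → A → ℝ) (d₀ : S → ℝ) : ℕ → S → ℝ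
  | 0 => d₀
  | (t+1) => fun s' => ∑ s, ∑ a, stateDist T π d₀ t s * π s a * T s a s'

/-- Point mass at state `s`. -/
def deltaDist (s : S) : S → ℝ := fun s' => if s' = s then 1 else 0

/-- The value function of policy `π`: expected discounted cumulative reward starting
from state `s`, i.e. `V^π(s) = E[Σ_t γ^t R(s_t,a_t) | s₀ = s]`. -/
noncomputable def mdpValue (T : S → A → S → ℝ) (R : S → A → ℝ) (γ : ℝ)
    (π : S → A → ℝ) (s : S) : ℝ :=
  ∑' t : ℕ, γ ^ t * ∑ s', ∑ a, stateDist T π (deltaDist s) t s' * π s' a * R s' a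

/-- The occupancy measure `ρ^π(s,a) = Σ_t γ^t P(s_t = s, a_t = a)` of policy `π`
starting from initial distribution `d₀`. -/
noncomputable def mdpOccupancy (T : S → A → S → ℝ) (γ : ℝ)
    (π : S → A → ℝ) (d₀ : S → ℝ) (q : S × A) : ℝ :=
  ∑' t : ℕ, γ ^ t * stateDist T π d₀ t q.1 * π q.1 q.2

lemma stateDist_nonneg {T : S → A → S → ℝ} {π : S → A → ℝ} {d₀ : S → ℝ}
    (hT : IsKernel T) (hπ : IsPolicy π) (hd : ∀ s, 0 ≤ d₀ s) :
    ∀ t s, 0 ≤ stateDist T π d₀ t s := by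
  intro t
  induction t with
  | zero => exact hd
  | succ t ih =>
    intro s'
    refine Finset.sum_nonneg fun s _ => Finset.sum_nonneg fun a _ => ?_
    exact mul_nonneg (mul_nonneg (ih s) (hπ.1 s a)) (hT.1 s a s')

lemma stateDist_sum {T : S → A → S → ℝ} {π : S → A → ℝ} {d₀ : S → ℝ}
    (hT : IsKernel T) (hπ : IsPolicy π) (hd : ∑ s, d₀ s = 1) :
    ∀ t, ∑ s, stateDist T π d₀ t s = 1 := by
  intro t
  induction t with
  | zero => exact hd
  | succ t ih =>
    have : ∑ s', ∑ s, ∑ a, stateDist T π d₀ t s * π s a * T s a s' = 1 := by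
      rw [Finset.sum_comm]
      have : ∀ s ∈ Finset.univ, ∑ s' : S, ∑ a, stateDist T π d₀ t s * π s a * T s a s'
          = stateDist T π d₀ t s := by
        intro s _
        rw [Finset.sum_comm]
        have : ∀ a ∈ Finset.univ, ∑ s' : S, stateDist T π d₀ t s * π s a * T s a s'
            = stateDist T π d₀ t s * π s a := by
          intro a _
          rw [← Finset.mul_sum, hT.2 s a, mul_one]
        rw [Finset.sum_congr rfl this, ← Finset.mul_sum, hπ.2 s, mul_one]
      rw [Finset.sum_congr rfl this, ih]
    simpa [stateDist] using this

lemma stateDist_le_one {T : S → A → S → ℝ} {π : S → A → ℝ} {d₀ : S → ℝ}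
    (hT : IsKernel T) (hπ : IsPolicy π) (hd : IsDist d₀) (t : ℕ) (s : S) :
    stateDist T π d₀ t s ≤ 1 := by
  calc stateDist T π d₀ t s
      ≤ ∑ s', stateDist T π d₀ t s' :=
        Finset.single_le_sum (fun s' _ => stateDist_nonneg hT hπ hd.1 t s') (Finset.mem_univ s)
    _ = 1 := stateDist_sum hT hπ hd.2 t

lemma summable_dist {T : S → A → S → ℝ} {π : S → A → ℝ} {d₀ : S → ℝ} {γ : ℝ}
    (hT : IsKernel T) (hπ : IsPolicy π) (hd : IsDist d₀) (hγ0 : 0 ≤ γ) (hγ1 : γ < 1)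
    (s : S) : Summable (fun t => γ ^ t * stateDist T π d₀ t s) := by
  apply Summable.of_nonneg_of_le
    (fun t => mul_nonneg (pow_nonneg hγ0 t) (stateDist_nonneg hT hπ hd.1 t s))
    (fun t => ?_) (summable_geometric_of_lt_one hγ0 hγ1)
  calc γ ^ t * stateDist T π d₀ t s ≤ γ ^ t * 1 := by
        exact mul_le_mul_of_nonneg_left (stateDist_le_one hT hπ hd t s) (pow_nonneg hγ0 t)
    _ = γ ^ t := mul_one _

noncomputable def stateOcc (T : S → A → S → ℝ) (γ : ℝ) (π : S → A → ℝ) (d₀ : S → ℝ)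
    (s : S) : ℝ := ∑' t : ℕ, γ ^ t * stateDist T π d₀ t s

lemma stateOcc_eq {T : S → A → S → ℝ} {π : S → A → ℝ} {d₀ : S → ℝ} {γ : ℝ}
    (hT : IsKernel T) (hπ : IsPolicy π) (hd : IsDist d₀) (hγ0 : 0 ≤ γ) (hγ1 : γ < 1)
    (s' : S) :
    stateOcc T γ π d₀ s' = d₀ s' + γ * ∑ s, ∑ a, stateOcc T γ π d₀ s * π s a * T s a s' := by
  have hsum := summable_dist hT hπ hd hγ0 hγ1 (T := T) (π := π) (d₀ := d₀)
  have hs1 : ∀ s : S, ∀ a : A, Summable (fun t => (γ * (γ ^ t * stateDist T π d₀ t s)) * π s a * T s a s') :=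
    fun s a => (((hsum s).mul_left γ).mul_right _).mul_right _
  have hs2 : ∀ s : S, Summable (fun t => ∑ a, (γ * (γ ^ t * stateDist T π d₀ t s)) * π s a * T s a s') :=
    fun s => summable_sum (fun a _ => hs1 s a)
  have h1 : ∀ t : ℕ, γ ^ (t+1) * stateDist T π d₀ (t+1) s'
      = ∑ s, ∑ a, (γ * (γ ^ t * stateDist T π d₀ t s)) * π s a * T s a s' := by
    intro t
    show γ ^ (t+1) * (∑ s, ∑ a, stateDist T π d₀ t s * π s a * T s a s') = _
    rw [Finset.mul_sum]
    refine Finset.sum_congr rfl fun s _ => ?_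
    rw [Finset.mul_sum]
    refine Finset.sum_congr rfl fun a _ => ?_
    ring
  have h2 : (∑' t : ℕ, γ ^ (t+1) * stateDist T π d₀ (t+1) s')
      = γ * ∑ s, ∑ a, stateOcc T γ π d₀ s * π s a * T s a s' := by
    rw [tsum_congr h1, Summable.tsum_finsetSum (fun s _ => hs2 s)]
    rw [Finset.mul_sum]
    refine Finset.sum_congr rfl fun s _ => ?_
    rw [Summable.tsum_finsetSum (fun a _ => hs1 s a), Finset.mul_sum]
    refine Finset.sum_congr rfl fun a _ => ?_
    calc ∑' t : ℕ, (γ * (γ ^ t * stateDist T π d₀ t s)) * π s a * T s a s'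
        = ∑' t : ℕ, (γ ^ t * stateDist T π d₀ t s) * (π s a * T s a s' * γ) :=
          tsum_congr fun t => by ring
      _ = (∑' t : ℕ, γ ^ t * stateDist T π d₀ t s) * (π s a * T s a s' * γ) :=
          tsum_mul_right
      _ = γ * (stateOcc T γ π d₀ s * π s a * T s a s') := by rw [stateOcc]; ring
  rw [stateOcc, Summable.tsum_eq_zero_add (hsum s'), h2]
  simp [stateDist]

lemma flow_unique {T : S → A → S → ℝ} {π : S → A → ℝ} {d₀ : S → ℝ} {γ : ℝ}
    (hT : IsKernel T) (hπ : IsPolicy π) (hγ0 : 0 ≤ γ) (hγ1 : γ < 1)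
    (x y : S → ℝ)
    (hx : ∀ s', x s' = d₀ s' + γ * ∑ s, ∑ a, x s * π s a * T s a s')
    (hy : ∀ s', y s' = d₀ s' + γ * ∑ s, ∑ a, y s * π s a * T s a s') :
    x = y := by
  set L : ℝ := ∑ s, |x s - y s| with hL
  have hbound : ∀ s', |x s' - y s'| ≤ γ * ∑ s, ∑ a, |x s - y s| * π s a * T s a s' := by
    intro s'
    have heq : x s' - y s' = γ * ∑ s, ∑ a, (x s - y s) * π s a * T s a s' := by
      have h3 : ∀ s : S, ∑ a, (x s - y s) * π s a * T s a s'
          = (∑ a, x s * π s a * T s a s') - ∑ a, y s * π s a * T s a s' := by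
        intro s
        rw [← Finset.sum_sub_distrib]
        exact Finset.sum_congr rfl fun a _ => by ring
      rw [Finset.sum_congr rfl (fun s _ => h3 s), Finset.sum_sub_distrib, hx s', hy s']
      ring
    rw [heq, abs_mul, abs_of_nonneg hγ0]
    refine mul_le_mul_of_nonneg_left ?_ hγ0
    calc |∑ s, ∑ a, (x s - y s) * π s a * T s a s'|
        ≤ ∑ s, |∑ a, (x s - y s) * π s a * T s a s'| := Finset.abs_sum_le_sum_abs _ _
      _ ≤ ∑ s, ∑ a, |(x s - y s) * π s a * T s a s'| :=
          Finset.sum_le_sum fun s _ => Finset.abs_sum_le_sum_abs _ _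
      _ = ∑ s, ∑ a, |x s - y s| * π s a * T s a s' := by
          refine Finset.sum_congr rfl fun s _ => Finset.sum_congr rfl fun a _ => ?_
          rw [abs_mul, abs_mul, abs_of_nonneg (hπ.1 s a), abs_of_nonneg (hT.1 s a s')]
  have key : L ≤ γ * L := by
    calc L ≤ ∑ s', γ * ∑ s, ∑ a, |x s - y s| * π s a * T s a s' :=
          Finset.sum_le_sum fun s' _ => hbound s'
      _ = γ * ∑ s', ∑ s, ∑ a, |x s - y s| * π s a * T s a s' := by rw [← Finset.mul_sum]
      _ = γ * L := by
          congr 1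
          rw [Finset.sum_comm, hL]
          refine Finset.sum_congr rfl fun s _ => ?_
          rw [Finset.sum_comm]
          have h4 : ∀ a : A, ∑ s' : S, |x s - y s| * π s a * T s a s'
              = |x s - y s| * π s a := by
            intro a
            rw [← Finset.mul_sum, hT.2 s a, mul_one]
          rw [Finset.sum_congr rfl (fun a _ => h4 a), ← Finset.mul_sum, hπ.2 s, mul_one]
  have hLnn : 0 ≤ L := Finset.sum_nonneg fun s _ => abs_nonneg _
  have hL0 : L = 0 := by nlinarith
  funext s
  have := (Finset.sum_eq_zero_iff_of_nonneg (fun s _ => abs_nonneg (x s - y s))).1 hL0 s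
    (Finset.mem_univ s)
  have := abs_eq_zero.1 this
  linarith


/-- Converse Bellman flow: any nonnegative solution of the flow constraints with
positive state marginals is the occupancy measure of the induced policy, and of
no other stationary policy. -/
theorem bellman_flow_converse
    (T : S → A → S → ℝ) (γ : ℝ) (d₀ : S → ℝ) (ρ : S × A → ℝ)
    (hT : IsKernel T) (hd : IsDist d₀) (hγ0 : 0 < γ) (hγ1 : γ < 1)
    (hρ0 : ∀ q : S × A, 0 ≤ ρ q)
    (hflow : ∀ s, ∑ a, ρ (s, a)
        = d₀ s + γ * ∑ s', ∑ a', ρ (s', a') * T s' a' s)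
    (hpos : ∀ s, 0 < ∑ a, ρ (s, a)) :
    IsPolicy (fun s a => ρ (s, a) / ∑ a', ρ (s, a')) ∧
    mdpOccupancy T γ (fun s a => ρ (s, a) / ∑ a', ρ (s, a')) d₀ = ρ ∧
    ∀ π : S → A → ℝ, IsPolicy π → mdpOccupancy T γ π d₀ = ρ →
      π = fun s a => ρ (s, a) / ∑ a', ρ (s, a') := by
  set m : S → ℝ := fun s => ∑ a, ρ (s, a) with hm
  have hmne : ∀ s, m s ≠ 0 := fun s => ne_of_gt (hpos s)
  set π₀ : S → A → ℝ := fun s a => ρ (s, a) / m s with hπ₀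
  have hpol : IsPolicy π₀ := by
    constructor
    · exact fun s a => div_nonneg (hρ0 (s, a)) (le_of_lt (hpos s))
    · intro s
      show (∑ a, ρ (s, a) / m s) = 1
      rw [← Finset.sum_div]
      exact div_self (hmne s)
  have hγ0' : (0:ℝ) ≤ γ := le_of_lt hγ0
  -- m satisfies the flow fixed-point equation for π₀
  have hmfix : ∀ s', m s' = d₀ s' + γ * ∑ s, ∑ a, m s * π₀ s a * T s a s' := by
    intro s'
    show (∑ a, ρ (s', a)) = d₀ s' + γ * ∑ s, ∑ a, m s * π₀ s a * T s a s'
    rw [hflow s']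
    congr 1
    congr 1
    refine Finset.sum_congr rfl fun s _ => Finset.sum_congr rfl fun a _ => ?_
    show ρ (s, a) * T s a s' = m s * (ρ (s, a) / m s) * T s a s'
    rw [mul_div_cancel₀ _ (hmne s)]
  have hofix : ∀ s', stateOcc T γ π₀ d₀ s'
      = d₀ s' + γ * ∑ s, ∑ a, stateOcc T γ π₀ d₀ s * π₀ s a * T s a s' :=
    fun s' => stateOcc_eq hT hpol hd hγ0' hγ1 s'
  have hocc_eq_m : stateOcc T γ π₀ d₀ = m :=
    flow_unique hT hpol hγ0' hγ1 _ _ hofix hmfix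
  -- occupancy factorization for any policy
  have hfac : ∀ (π : S → A → ℝ) (q : S × A),
      mdpOccupancy T γ π d₀ q = stateOcc T γ π d₀ q.1 * π q.1 q.2 := by
    intro π q
    rw [mdpOccupancy, stateOcc, ← tsum_mul_right]
  refine ⟨hpol, ?_, ?_⟩
  · funext q
    rw [hfac π₀ q, hocc_eq_m]
    show m q.1 * (ρ (q.1, q.2) / m q.1) = ρ q
    rw [mul_div_cancel₀ _ (hmne q.1)]
  · intro π hπ hπocc
    have hρ : ∀ s a, ρ (s, a) = stateOcc T γ π d₀ s * π s a := by
      intro s a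
      rw [← hπocc]
      simpa using hfac π (s, a)
    have hms : ∀ s, m s = stateOcc T γ π d₀ s := by
      intro s
      rw [hm]
      simp only [hρ]
      rw [← Finset.mul_sum, hπ.2 s, mul_one]
    funext s a
    show π s a = ρ (s, a) / m s
    rw [eq_div_iff (hmne s), hρ s a, hms s]
    ring

end MDP
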